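/- Let ω : Λ²sl₂ → F₀ be defined by ω(X,Y) = Q(α(X,Y)), where Q : F₁ → F₀ is the linear primitive of d with Q(xⁿ dx) = xⁿ⁺¹/(n+1) (so Q(dx) = x), and α(k,e) = −α(e,k) = dx, zero otherwise. Let Φ = δ^{F₀}(ω) be its Chevalley–Eilenberg coboundary, Φ(X,Y,Z) = X▷ω(Y,Z) + Y▷ω(Z,X) + Z▷ω(X,Y) + ω(X,[Y,Z]) + ω(Y,[Z,X]) + ω(Z,[X,Y]). Then with r = Σ_i s_i ⊗ t_i = f⊗e + e⊗f − 2k⊗k, for all X, Y ∈ sl₂: Σ_i Φ(s_i, X, Y) ⊗ t_i = 1 ⊗ [X,Y] in F₀ ⊗ sl₂, where 1 ∈ F₀ is the constant polynomial 1. -/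
import Mathlib


open Polynomial
open scoped TensorProduct

namespace Stmt14

/-- The embedding `sl₂(ℂ) → W₁`, `f ↦ d/dx`, `k ↦ x d/dx`, `e ↦ x² d/dx`
(matrix model of `sl₂(ℂ)`), identifying `p(x) d/dx` with `p`. -/
noncomputable def m (A : Matrix (Fin 2) (Fin 2) ℂ) : Polynomial ℂ :=
  C (-(A 0 1)) + C (2 * A 1 1) * X + C (A 1 0) * X ^ 2

/-- The action of `sl₂` on `F₀`: `(p d/dx) ▷ q = p q'`. -/
noncomputable def actF0 (A : Matrix (Fin 2) (Fin 2) ℂ) (q : Polynomial ℂ) :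
    Polynomial ℂ := m A * derivative q

/-- The 2-cochain `ω = Q ∘ α : Λ²sl₂ → F₀`, with `ω(k,e) = −ω(e,k) = x` and
`ω` zero on the other basis pairs (here `Q` is the primitive of `d` with
`Q(dx) = x`). -/
noncomputable def w (A B : Matrix (Fin 2) (Fin 2) ℂ) : Polynomial ℂ :=
  C (2 * A 1 1 * B 1 0 - 2 * A 1 0 * B 1 1) * X

/-- The Chevalley–Eilenberg coboundary `Φ = δ^{F₀}(ω)`. -/
noncomputable def Phi (A B D : Matrix (Fin 2) (Fin 2) ℂ) : Polynomial ℂ :=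
  actF0 A (w B D) + actF0 B (w D A) + actF0 D (w A B)
    + w A ⁅B, D⁆ + w B ⁅D, A⁆ + w D ⁅A, B⁆

/-- The basis `e, f, k` of `sl₂(ℂ)`. -/
noncomputable def eMat : Matrix (Fin 2) (Fin 2) ℂ := !![0, 0; 1, 0]
noncomputable def fMat : Matrix (Fin 2) (Fin 2) ℂ := !![0, -1; 0, 0]
noncomputable def kMat : Matrix (Fin 2) (Fin 2) ℂ := !![-(1/2 : ℂ), 0; 0, 1/2]


lemma phi_f (A B : Matrix (Fin 2) (Fin 2) ℂ) (hA : A.trace = 0) (hB : B.trace = 0) :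
    Phi fMat A B = C (2 * A 1 0 * B 0 0 - 2 * A 0 0 * B 1 0) := by
  rw [Matrix.trace_fin_two] at hA hB
  have hA' : A 1 1 = -A 0 0 := by linear_combination hA
  have hB' : B 1 1 = -B 0 0 := by linear_combination hB
  apply Polynomial.funext; intro z
  simp [Phi, actF0, w, m, fMat, eMat, kMat, Ring.lie_def, Matrix.sub_apply,
    Matrix.mul_apply, Matrix.vecMul, dotProduct, Fin.sum_univ_two, hA', hB']
  ring

lemma phi_e (A B : Matrix (Fin 2) (Fin 2) ℂ) (hA : A.trace = 0) (hB : B.trace = 0) :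
    Phi eMat A B = C (2 * A 0 1 * B 0 0 - 2 * A 0 0 * B 0 1) := by
  rw [Matrix.trace_fin_two] at hA hB
  have hA' : A 1 1 = -A 0 0 := by linear_combination hA
  have hB' : B 1 1 = -B 0 0 := by linear_combination hB
  apply Polynomial.funext; intro z
  simp [Phi, actF0, w, m, fMat, eMat, kMat, Ring.lie_def, Matrix.sub_apply,
    Matrix.mul_apply, Matrix.vecMul, dotProduct, Fin.sum_univ_two, hA', hB']
  ring

lemma phi_k (A B : Matrix (Fin 2) (Fin 2) ℂ) (hA : A.trace = 0) (hB : B.trace = 0) :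
    Phi kMat A B = C (A 0 1 * B 1 0 - A 1 0 * B 0 1) := by
  rw [Matrix.trace_fin_two] at hA hB
  have hA' : A 1 1 = -A 0 0 := by linear_combination hA
  have hB' : B 1 1 = -B 0 0 := by linear_combination hB
  apply Polynomial.funext; intro z
  simp [Phi, actF0, w, m, fMat, eMat, kMat, Ring.lie_def, Matrix.sub_apply,
    Matrix.mul_apply, Matrix.vecMul, dotProduct, Fin.sum_univ_two, hA', hB']
  ring

/-- With `r = Σ_i s_i ⊗ t_i = f⊗e + e⊗f − 2k⊗k`, for all `X, Y ∈ sl₂`: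
`Σ_i Φ(s_i, X, Y) ⊗ t_i = 1 ⊗ [X,Y]` in `F₀ ⊗ sl₂`. -/
theorem phi_identity (A B : Matrix (Fin 2) (Fin 2) ℂ)
    (hA : A.trace = 0) (hB : B.trace = 0) :
    (Phi fMat A B ⊗ₜ[ℂ] eMat + Phi eMat A B ⊗ₜ[ℂ] fMat
        - (2 : ℂ) • (Phi kMat A B ⊗ₜ[ℂ] kMat)
      : Polynomial ℂ ⊗[ℂ] Matrix (Fin 2) (Fin 2) ℂ)
      = (1 : Polynomial ℂ) ⊗ₜ[ℂ] ⁅A, B⁆ := by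
  rw [phi_f A B hA hB, phi_e A B hA hB, phi_k A B hA hB]
  have hC : ∀ c : ℂ, (C c : Polynomial ℂ) = c • (1 : Polynomial ℂ) := by
    intro c; rw [← Polynomial.C_1, Polynomial.smul_C, smul_eq_mul, mul_one]
  rw [hC, hC, hC, TensorProduct.smul_tmul, TensorProduct.smul_tmul, TensorProduct.smul_tmul, ← TensorProduct.tmul_smul,
    ← TensorProduct.tmul_add, ← TensorProduct.tmul_sub]
  congr 1
  rw [Matrix.trace_fin_two] at hA hB
  have hA' : A 1 1 = -A 0 0 := by linear_combination hA
  have hB' : B 1 1 = -B 0 0 := by linear_combination hB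
  ext i j
  fin_cases i <;> fin_cases j <;>
    simp [eMat, fMat, kMat, Ring.lie_def, Matrix.sub_apply, Matrix.mul_apply,
      Fin.sum_univ_two, hA', hB'] <;> ring

end Stmt14
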